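/- arXiv:2104.00512 — 3 statements merged into one kernel-verified Lean document; each statement's English description precedes it below -/
import Mathlib

section
/- One-step well-definedness and increment bound (Lemma 3.1, items 1–2). Under the one-step setup, almost surely 1 + η·Zᵀ V̄^{−1} Ȳ ≥ 1/2 > 0, the top block of V⁺ := (I_d + ηYYᵀ)V is invertible (so T⁺ is well-defined), and ‖T⁺ − T‖₂ ≤ 2μη·[ν^{1/2}·λ_{1∼p}·(1+τ²) + ν₁·λ_{1∼p}·τ]. -/
/-!
Write `V⁺ = V + η Y Zᵀ` with `Z = VᵀY`. Its top block factors as `(I + η Ȳ wᵀ) V̄` with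
`wᵀ = Zᵀ V̄⁻¹`, so by the matrix determinant lemma it is invertible as soon as
`a = 1 + η Zᵀ V̄⁻¹ Ȳ ≠ 0`, and then `T⁺ = T + (η / a) (Y̲ - T Ȳ) wᵀ` (Sherman–Morrison).
Since `V V̄⁻¹` has blocks `I` and `T` and `V` is an isometry, `‖V̄⁻¹‖² ≤ 1 + τ²` and
`w = Ȳ + Tᵀ Y̲`; the first gives `|Zᵀ V̄⁻¹ Ȳ| ≤ √(1 + κ²) λ_{1∼p} μ`, hence `a ≥ 1/2`.
Finally `(Y̲ - T Ȳ)(Ȳ + Tᵀ Y̲)ᵀ = (Y̲ Ȳᵀ - T Ȳ Y̲ᵀ T) + (P - c/2) T - T (Q - c/2)` with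
`P = Y̲ Y̲ᵀ`, `Q = Ȳ Ȳᵀ` and `c = ν₁ λ_{1∼p} μ`. The first bracket gives the `ν^{1/2}` term;
since `P` and `Q` are positive semidefinite of rank one and norm at most `c`, the shifted
factors have norm at most `c/2`, which gives the `ν₁ τ` term.
-/

open MeasureTheory Matrix

/-- Spectral norm (ℓ²-operator norm) of a real matrix. -/
noncomputable def specNorm {m n : ℕ} (A : Matrix (Fin m) (Fin n) ℝ) : ℝ :=
  sSup {c : ℝ | ∃ x : Fin n → ℝ, ∑ j, x j ^ 2 ≤ 1 ∧ c = Real.sqrt (∑ i, (A.mulVec x) i ^ 2)}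

/-- Top `p×p` block of a `d×p` matrix. -/
def topBlock {d p : ℕ} (h : p ≤ d) (X : Matrix (Fin d) (Fin p) ℝ) :
    Matrix (Fin p) (Fin p) ℝ :=
  Matrix.of fun i j => X (Fin.castLE h i) j

/-- Bottom `(d−p)×p` block of a `d×p` matrix. -/
def botBlock {d p : ℕ} (X : Matrix (Fin d) (Fin p) ℝ) :
    Matrix (Fin (d - p)) (Fin p) ℝ :=
  Matrix.of fun i j => X ⟨p + i, by have := i.isLt; omega⟩ j

open WithLp
open scoped Matrix.Norms.L2Operator

theorem norm_toLp_two_eq_sqrt {n : Type*} [Fintype n] (x : n → ℝ) :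
    ‖toLp 2 x‖ = √(∑ i, x i ^ 2) := by
  simp [EuclideanSpace.norm_eq]

theorem specNorm_eq_l2_opNorm {m n : ℕ} (A : Matrix (Fin m) (Fin n) ℝ) : specNorm A = ‖A‖ := by
  rw [l2_opNorm_def, ← ContinuousLinearMap.sSup_unitClosedBall_eq_norm, specNorm]
  congr 1
  ext c
  simp only [Set.mem_ofPred_eq, Set.mem_image, Metric.mem_closedBall, dist_zero_right]
  constructor
  · rintro ⟨x, hx, rfl⟩
    exact ⟨toLp 2 x, by rwa [norm_toLp_two_eq_sqrt, Real.sqrt_le_one], norm_toLp_two_eq_sqrt _⟩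
  · rintro ⟨x, hx, rfl⟩
    rw [← toLp_ofLp 2 x, norm_toLp_two_eq_sqrt, Real.sqrt_le_one] at hx
    exact ⟨ofLp x, hx, norm_toLp_two_eq_sqrt _⟩

theorem abs_dotProduct_le_norm_toLp_mul {n : Type*} [Fintype n] (x y : n → ℝ) :
    |x ⬝ᵥ y| ≤ ‖toLp 2 x‖ * ‖toLp 2 y‖ := by
  simpa [EuclideanSpace.inner_toLp_toLp, dotProduct_comm y x] using
    abs_real_inner_le_norm (toLp 2 x) (toLp 2 y)

theorem norm_toLp_sq_le_sum_of_abs_le_sqrt {n : Type*} [Fintype n] {x b : n → ℝ}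
    (hb : ∀ i, 0 ≤ b i) (hx : ∀ i, |x i| ≤ √(b i)) : ‖toLp 2 x‖ ^ 2 ≤ ∑ i, b i := by
  rw [norm_toLp_two_eq_sqrt, Real.sq_sqrt (by positivity)]
  exact Finset.sum_le_sum fun i _ => (Real.sq_le (hb i)).mpr (abs_le.mp (hx i))

section L2OpNorm

variable {m n : Type*} [Fintype m] [Fintype n] [DecidableEq n]

theorem Matrix.norm_toLp_mulVec_le (A : Matrix m n ℝ) (x : n → ℝ) :
    ‖toLp 2 (A *ᵥ x)‖ ≤ ‖A‖ * ‖toLp 2 x‖ :=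
  A.l2_opNorm_mulVec (toLp 2 x)

theorem Matrix.l2_opNorm_le_of_mulVec {A : Matrix m n ℝ} {C : ℝ} (hC : 0 ≤ C)
    (h : ∀ x, ‖toLp 2 (A *ᵥ x)‖ ≤ C * ‖toLp 2 x‖) : ‖A‖ ≤ C :=
  ContinuousLinearMap.opNorm_le_bound _ hC fun x => h (ofLp x)

theorem Matrix.l2_opNorm_vecMulVec_le (a : m → ℝ) (b : n → ℝ) :
    ‖vecMulVec a b‖ ≤ ‖toLp 2 a‖ * ‖toLp 2 b‖ := by
  refine l2_opNorm_le_of_mulVec (by positivity) fun x => ?_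
  rw [vecMulVec_mulVec, op_smul_eq_smul, toLp_smul, norm_smul, Real.norm_eq_abs]
  calc |b ⬝ᵥ x| * ‖toLp 2 a‖ ≤ ‖toLp 2 b‖ * ‖toLp 2 x‖ * ‖toLp 2 a‖ := by
        gcongr; exact abs_dotProduct_le_norm_toLp_mul b x
    _ = ‖toLp 2 a‖ * ‖toLp 2 b‖ * ‖toLp 2 x‖ := by ring

theorem Matrix.l2_opNorm_vecMulVec_self_sub_smul_one_le (a : n → ℝ) {r : ℝ}
    (hr : ‖toLp 2 a‖ ^ 2 ≤ 2 * r) : ‖vecMulVec a a - r • (1 : Matrix n n ℝ)‖ ≤ r := by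
  have hr0 : 0 ≤ r := by nlinarith [norm_nonneg (toLp 2 a)]
  refine l2_opNorm_le_of_mulVec hr0 fun x => ?_
  rw [sub_mulVec, vecMulVec_mulVec, smul_mulVec, one_mulVec, op_smul_eq_smul, toLp_sub,
    toLp_smul, toLp_smul]
  set t := a ⬝ᵥ x
  have ht : inner ℝ (toLp 2 a) (toLp 2 x) = t := by
    simp [EuclideanSpace.inner_toLp_toLp, t, dotProduct_comm]
  refine (sq_le_sq₀ (norm_nonneg _) (by positivity)).mp ?_
  rw [norm_sub_sq_real, norm_smul, norm_smul, inner_smul_left, inner_smul_right, ht, conj_trivial,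
    Real.norm_eq_abs, Real.norm_eq_abs, abs_of_nonneg hr0, mul_pow, mul_pow, sq_abs]
  nlinarith [mul_le_mul_of_nonneg_left hr (sq_nonneg t)]

theorem Matrix.l2_opNorm_mul_of_transpose_mul_self_eq_one {k : Type*} [Fintype k]
    [DecidableEq k] {V : Matrix m n ℝ} (hV : Vᵀ * V = 1) (A : Matrix n k ℝ) : ‖V * A‖ = ‖A‖ := by
  refine (mul_self_inj (norm_nonneg _) (norm_nonneg _)).mp ?_
  rw [← l2_opNorm_conjTranspose_mul_self, ← l2_opNorm_conjTranspose_mul_self,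
    conjTranspose_mul, Matrix.mul_assoc, ← Matrix.mul_assoc Vᴴ,
    conjTranspose_eq_transpose_of_trivial V, hV, Matrix.one_mul]

theorem Matrix.l2_opNorm_vecMulVec_sub_mulVec_add_vecMul_le [DecidableEq m] (T : Matrix m n ℝ)
    (a : n → ℝ) (b : m → ℝ) {c : ℝ} (ha : ‖toLp 2 a‖ ^ 2 ≤ c) (hb : ‖toLp 2 b‖ ^ 2 ≤ c) :
    ‖vecMulVec (b - T *ᵥ a) (a + b ᵥ* T)‖ ≤
      (1 + ‖T‖ ^ 2) * (‖toLp 2 a‖ * ‖toLp 2 b‖) + ‖T‖ * c := by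
  -- the two shifts by `c / 2` cancel
  have hsplit : vecMulVec (b - T *ᵥ a) (a + b ᵥ* T) = vecMulVec b a - T * vecMulVec a b * T +
      ((vecMulVec b b - (c / 2) • 1) * T - T * (vecMulVec a a - (c / 2) • 1)) := by
    rw [sub_vecMulVec, vecMulVec_add, vecMulVec_add, ← mul_vecMulVec, ← vecMulVec_mul,
      ← vecMulVec_mul, ← mul_vecMulVec, Matrix.sub_mul, Matrix.mul_sub, Matrix.smul_mul,
      Matrix.mul_smul, Matrix.one_mul, Matrix.mul_one, Matrix.mul_assoc]
    abel
  have hba := l2_opNorm_vecMulVec_le b a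
  have hTabT : ‖T * vecMulVec a b * T‖ ≤ ‖T‖ * (‖toLp 2 a‖ * ‖toLp 2 b‖) * ‖T‖ :=
    (l2_opNorm_mul _ _).trans <| by
      gcongr; exact (l2_opNorm_mul _ _).trans (by gcongr; exact l2_opNorm_vecMulVec_le a b)
  have hbbT : ‖(vecMulVec b b - (c / 2) • 1) * T‖ ≤ c / 2 * ‖T‖ :=
    (l2_opNorm_mul _ _).trans <| by
      gcongr; exact l2_opNorm_vecMulVec_self_sub_smul_one_le b (by linarith)
  have hTaa : ‖T * (vecMulVec a a - (c / 2) • 1)‖ ≤ ‖T‖ * (c / 2) :=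
    (l2_opNorm_mul _ _).trans <| by
      gcongr; exact l2_opNorm_vecMulVec_self_sub_smul_one_le a (by linarith)
  rw [hsplit]
  calc _ ≤ ‖vecMulVec b a‖ + ‖T * vecMulVec a b * T‖ +
        (‖(vecMulVec b b - (c / 2) • 1) * T‖ + ‖T * (vecMulVec a a - (c / 2) • 1)‖) :=
        norm_add_le_of_le (norm_sub_le _ _) (norm_sub_le _ _)
    _ ≤ _ := by linarith

end L2OpNorm

def botVec {d : ℕ} (p : ℕ) (y : Fin d → ℝ) : Fin (d - p) → ℝ :=
  fun i => y ⟨p + i, by have := i.isLt; omega⟩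

section Blocks

variable {d p : ℕ} (h : p ≤ d)

def topVec (y : Fin d → ℝ) : Fin p → ℝ := fun j => y (Fin.castLE h j)

/-- If `topBlock h X` is invertible, the column space of `X` is the graph of `graphMatrix h X`;
this is the paper's `T`. -/
noncomputable def graphMatrix (X : Matrix (Fin d) (Fin p) ℝ) : Matrix (Fin (d - p)) (Fin p) ℝ :=
  botBlock X * (topBlock h X)⁻¹

theorem Fin.sum_univ_eq_sum_castLE_add {M : Type*} [AddCommMonoid M] (f : Fin d → M) :
    ∑ i, f i = ∑ j : Fin p, f (Fin.castLE h j) + ∑ j : Fin (d - p), f ⟨p + j, by omega⟩ := by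
  rw [← Equiv.sum_comp (finCongr (by omega : p + (d - p) = d)) f, Fin.sum_univ_add]
  rfl

theorem vecMul_eq_topVec_vecMul_add_botVec_vecMul (y : Fin d → ℝ)
    (X : Matrix (Fin d) (Fin p) ℝ) :
    y ᵥ* X = topVec h y ᵥ* topBlock h X + botVec p y ᵥ* botBlock X := by
  ext j
  exact Fin.sum_univ_eq_sum_castLE_add h _

theorem transpose_mul_self_eq_topBlock_add_botBlock (X : Matrix (Fin d) (Fin p) ℝ) :
    Xᵀ * X = (topBlock h X)ᵀ * topBlock h X + (botBlock X)ᵀ * botBlock X := by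
  ext i j
  exact Fin.sum_univ_eq_sum_castLE_add h _

theorem topBlock_mul (X : Matrix (Fin d) (Fin p) ℝ) (M : Matrix (Fin p) (Fin p) ℝ) :
    topBlock h (X * M) = topBlock h X * M := rfl

theorem botBlock_mul (X : Matrix (Fin d) (Fin p) ℝ) (M : Matrix (Fin p) (Fin p) ℝ) :
    botBlock (X * M) = botBlock X * M := rfl

theorem topBlock_add_smul_vecMulVec (X : Matrix (Fin d) (Fin p) ℝ) (η : ℝ) (y : Fin d → ℝ)
    (z : Fin p → ℝ) :
    topBlock h (X + η • vecMulVec y z) = topBlock h X + η • vecMulVec (topVec h y) z := rfl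

theorem botBlock_add_smul_vecMulVec (X : Matrix (Fin d) (Fin p) ℝ) (η : ℝ) (y : Fin d → ℝ)
    (z : Fin p → ℝ) :
    botBlock (X + η • vecMulVec y z) = botBlock X + η • vecMulVec (botVec p y) z := rfl

theorem l2_opNorm_sq_le_topBlock_add_botBlock (X : Matrix (Fin d) (Fin p) ℝ) :
    ‖X‖ ^ 2 ≤ ‖topBlock h X‖ ^ 2 + ‖botBlock X‖ ^ 2 := by
  simp only [sq, ← l2_opNorm_conjTranspose_mul_self, conjTranspose_eq_transpose_of_trivial]
  rw [transpose_mul_self_eq_topBlock_add_botBlock h]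
  exact norm_add_le _ _

end Blocks

section RankOneUpdate

variable {d p : ℕ} (h : p ≤ d) {X : Matrix (Fin d) (Fin p) ℝ}

theorem vecMul_vecMul_inv_topBlock (hX : IsUnit (topBlock h X)) (y : Fin d → ℝ) :
    y ᵥ* X ᵥ* (topBlock h X)⁻¹ = topVec h y + botVec p y ᵥ* graphMatrix h X := by
  rw [vecMul_vecMul, vecMul_eq_topVec_vecMul_add_botVec_vecMul h, topBlock_mul, botBlock_mul,
    mul_nonsing_inv _ ((isUnit_iff_isUnit_det _).mp hX), vecMul_one]
  rfl

variable (hX : IsUnit (topBlock h X)) (η : ℝ) (y : Fin d → ℝ) (z : Fin p → ℝ)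
include hX

theorem topBlock_add_smul_vecMulVec_eq_mul :
    topBlock h (X + η • vecMulVec y z) =
      (1 + η • vecMulVec (topVec h y) (z ᵥ* (topBlock h X)⁻¹)) * topBlock h X := by
  rw [topBlock_add_smul_vecMulVec, add_mul, one_mul, smul_mul, vecMulVec_mul, vecMul_vecMul,
    nonsing_inv_mul _ ((isUnit_iff_isUnit_det _).mp hX), vecMul_one]

theorem det_topBlock_add_smul_vecMulVec :
    (topBlock h (X + η • vecMulVec y z)).det =
      (1 + η * (z ⬝ᵥ (topBlock h X)⁻¹ *ᵥ topVec h y)) * (topBlock h X).det := by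
  rw [topBlock_add_smul_vecMulVec_eq_mul h hX, det_mul, ← smul_vecMulVec, vecMulVec_eq (Fin 1),
    det_one_add_replicateCol_mul_replicateRow, dotProduct_smul, dotProduct_mulVec, smul_eq_mul]

theorem isUnit_topBlock_add_smul_vecMulVec
    (ha : 1 + η * (z ⬝ᵥ (topBlock h X)⁻¹ *ᵥ topVec h y) ≠ 0) :
    IsUnit (topBlock h (X + η • vecMulVec y z)) := by
  rw [isUnit_iff_isUnit_det, det_topBlock_add_smul_vecMulVec h hX, IsUnit.mul_iff]
  exact ⟨ha.isUnit, (isUnit_iff_isUnit_det _).mp hX⟩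

theorem graphMatrix_add_smul_vecMulVec
    (ha : 1 + η * (z ⬝ᵥ (topBlock h X)⁻¹ *ᵥ topVec h y) ≠ 0) :
    graphMatrix h (X + η • vecMulVec y z) = graphMatrix h X +
      (η / (1 + η * (z ⬝ᵥ (topBlock h X)⁻¹ *ᵥ topVec h y))) •
        vecMulVec (botVec p y - graphMatrix h X *ᵥ topVec h y) (z ᵥ* (topBlock h X)⁻¹) := by
  have hunit := isUnit_topBlock_add_smul_vecMulVec h hX η y z ha
  set s := z ⬝ᵥ (topBlock h X)⁻¹ *ᵥ topVec h y
  have hB := (isUnit_iff_isUnit_det _).mp hX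
  have hTB : graphMatrix h X * topBlock h X = botBlock X := nonsing_inv_mul_cancel_right _ _ hB
  have hwB : z ᵥ* (topBlock h X)⁻¹ ᵥ* topBlock h X = z := by
    rw [vecMul_vecMul, nonsing_inv_mul _ hB, vecMul_one]
  have hws : z ᵥ* (topBlock h X)⁻¹ ⬝ᵥ topVec h y = s := (dotProduct_mulVec _ _ _).symm
  have hcoef : η / (1 + η * s) + η / (1 + η * s) * η * s = η := by field_simp
  have key : (graphMatrix h X + (η / (1 + η * s)) •
        vecMulVec (botVec p y - graphMatrix h X *ᵥ topVec h y) (z ᵥ* (topBlock h X)⁻¹)) *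
      topBlock h (X + η • vecMulVec y z) = botBlock (X + η • vecMulVec y z) := by
    rw [topBlock_add_smul_vecMulVec, botBlock_add_smul_vecMulVec, Matrix.add_mul, Matrix.mul_add,
      Matrix.mul_add, hTB, Matrix.mul_smul, mul_vecMulVec, Matrix.smul_mul, vecMulVec_mul, hwB,
      Matrix.smul_mul, Matrix.mul_smul, vecMulVec_mul_vecMulVec, hws, vecMulVec_smul, smul_smul,
      smul_smul, ← add_smul, hcoef, ← sub_add_cancel (botVec p y) (graphMatrix h X *ᵥ topVec h y),
      add_vecMulVec, add_sub_cancel_right, smul_add]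
    abel
  rw [graphMatrix, ← key, mul_nonsing_inv_cancel_right _ _ ((isUnit_iff_isUnit_det _).mp hunit)]

end RankOneUpdate

section Orthonormal

variable {d p : ℕ} (h : p ≤ d) {V : Matrix (Fin d) (Fin p) ℝ} (hV : Vᵀ * V = 1)
  (hB : IsUnit (topBlock h V))
include hV hB

theorem l2_opNorm_inv_topBlock_sq_le : ‖(topBlock h V)⁻¹‖ ^ 2 ≤ 1 + ‖graphMatrix h V‖ ^ 2 := by
  rw [← l2_opNorm_mul_of_transpose_mul_self_eq_one hV]
  refine (l2_opNorm_sq_le_topBlock_add_botBlock h _).trans ?_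
  rw [topBlock_mul, mul_nonsing_inv _ ((isUnit_iff_isUnit_det _).mp hB), botBlock_mul]
  refine add_le_add ?_ le_rfl
  rw [← diagonal_one, l2_opNorm_diagonal]
  exact pow_le_one₀ (norm_nonneg _) (pi_norm_le_iff_of_nonneg zero_le_one |>.mpr fun _ => by simp)

theorem abs_dotProduct_inv_topBlock_mulVec_le (z x : Fin p → ℝ) :
    |z ⬝ᵥ (topBlock h V)⁻¹ *ᵥ x| ≤
      √(1 + ‖graphMatrix h V‖ ^ 2) * (‖toLp 2 z‖ * ‖toLp 2 x‖) := by
  have hinv := Real.le_sqrt_of_sq_le (l2_opNorm_inv_topBlock_sq_le h hV hB)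
  calc _ ≤ ‖toLp 2 z‖ * ‖toLp 2 ((topBlock h V)⁻¹ *ᵥ x)‖ := abs_dotProduct_le_norm_toLp_mul _ _
    _ ≤ ‖toLp 2 z‖ * (‖(topBlock h V)⁻¹‖ * ‖toLp 2 x‖) := by gcongr; exact norm_toLp_mulVec_le _ _
    _ ≤ ‖toLp 2 z‖ * (√(1 + ‖graphMatrix h V‖ ^ 2) * ‖toLp 2 x‖) := by gcongr
    _ = _ := by ring

theorem one_half_le_one_add_mul_dotProduct_inv_topBlock_mulVec {η α κ : ℝ} (hη : 0 ≤ η)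
    (hκ : ‖graphMatrix h V‖ ≤ κ) (hstep : 2 * α ^ 2 * √(κ ^ 2 + 1) * η ≤ 1) {z x : Fin p → ℝ}
    (hz : ‖toLp 2 z‖ ≤ α) (hx : ‖toLp 2 x‖ ≤ α) :
    1 / 2 ≤ 1 + η * (z ⬝ᵥ (topBlock h V)⁻¹ *ᵥ x) := by
  have hα : 0 ≤ α := (norm_nonneg _).trans hz
  have hs : |z ⬝ᵥ (topBlock h V)⁻¹ *ᵥ x| ≤ √(κ ^ 2 + 1) * α ^ 2 := by
    refine (abs_dotProduct_inv_topBlock_mulVec_le h hV hB z x).trans ?_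
    rw [sq α, add_comm 1]
    gcongr
  nlinarith [neg_abs_le (z ⬝ᵥ (topBlock h V)⁻¹ *ᵥ x)]

end Orthonormal

section OjaUpdate

variable {d p : ℕ} (h : p ≤ d)

noncomputable def ojaUpdate (η : ℝ) (y : Fin d → ℝ) (X : Matrix (Fin d) (Fin p) ℝ) :
    Matrix (Fin d) (Fin p) ℝ :=
  (1 + η • vecMulVec y y) * X

variable {X : Matrix (Fin d) (Fin p) ℝ} (η : ℝ) (y : Fin d → ℝ)

theorem ojaUpdate_eq_add_smul_vecMulVec : ojaUpdate η y X = X + η • vecMulVec y (y ᵥ* X) := by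
  rw [ojaUpdate, Matrix.add_mul, Matrix.one_mul, Matrix.smul_mul, vecMulVec_mul]

variable (hX : IsUnit (topBlock h X))
include hX

theorem isUnit_topBlock_ojaUpdate
    (ha : 1 + η * ((Xᵀ *ᵥ y) ⬝ᵥ (topBlock h X)⁻¹ *ᵥ topVec h y) ≠ 0) :
    IsUnit (topBlock h (ojaUpdate η y X)) := by
  rw [mulVec_transpose] at ha
  rw [ojaUpdate_eq_add_smul_vecMulVec]
  exact isUnit_topBlock_add_smul_vecMulVec h hX η y _ ha

theorem l2_opNorm_graphMatrix_ojaUpdate_sub_le (hη : 0 ≤ η)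
    (ha : 1 / 2 ≤ 1 + η * ((Xᵀ *ᵥ y) ⬝ᵥ (topBlock h X)⁻¹ *ᵥ topVec h y)) {L ν : ℝ}
    (hν : 0 ≤ ν) (htop : ‖toLp 2 (topVec h y)‖ ^ 2 ≤ L)
    (hbot : ‖toLp 2 (botVec p y)‖ ^ 2 ≤ ν * L) :
    ‖graphMatrix h (ojaUpdate η y X) - graphMatrix h X‖ ≤
      2 * η * (√ν * L * (1 + ‖graphMatrix h X‖ ^ 2) + max 1 ν * L * ‖graphMatrix h X‖) := by
  rw [mulVec_transpose] at ha
  have hL : 0 ≤ L := (sq_nonneg _).trans htop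
  have hcoef : η / (1 + η * (y ᵥ* X ⬝ᵥ (topBlock h X)⁻¹ *ᵥ topVec h y)) ≤ 2 * η := by
    rw [div_le_iff₀ (by linarith)]; nlinarith
  have hprod : ‖toLp 2 (topVec h y)‖ * ‖toLp 2 (botVec p y)‖ ≤ √ν * L :=
    calc _ ≤ √L * (√ν * √L) := by
          rw [← Real.sqrt_mul hν]
          gcongr <;> exact Real.le_sqrt_of_sq_le ‹_›
      _ = √ν * L := by rw [mul_left_comm, Real.mul_self_sqrt hL]
  have hbound := l2_opNorm_vecMulVec_sub_mulVec_add_vecMul_le (graphMatrix h X) (topVec h y)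
    (botVec p y) (htop.trans (le_mul_of_one_le_left hL (le_max_left 1 ν)))
    (hbot.trans (by gcongr; exact le_max_right 1 ν))
  rw [ojaUpdate_eq_add_smul_vecMulVec, graphMatrix_add_smul_vecMulVec h hX _ _ _ (by linarith),
    add_sub_cancel_left, vecMul_vecMul_inv_topBlock h hX, norm_smul, Real.norm_eq_abs,
    abs_of_nonneg (div_nonneg hη (by linarith))]
  refine (mul_le_mul hcoef hbound (norm_nonneg _) (by positivity)).trans ?_
  gcongr 2 * η * ?_
  linarith [mul_le_mul_of_nonneg_left hprod (by positivity : 0 ≤ 1 + ‖graphMatrix h X‖ ^ 2)]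

end OjaUpdate

/-- One-step well-definedness and increment bound (Lemma 3.1, items 1–2):
under the one-step setup, almost surely `1 + ηZᵀV̄⁻¹Ȳ ≥ 1/2 > 0`, the top block of
`V⁺ = (I + ηYYᵀ)V` is invertible, and
`‖T⁺ − T‖₂ ≤ 2μη(ν^{1/2}λ_{1∼p}(1+τ²) + ν₁λ_{1∼p}τ)`. -/
theorem oja_one_step_increment
    (Ω : Type) [MeasurableSpace Ω] (μ : Measure Ω)
    (d p : ℕ) (hp : 1 ≤ p) (hpd : p < d)
    (lam : Fin d → ℝ) (hpos : ∀ i, 0 < lam i)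
    (V : Matrix (Fin d) (Fin p) ℝ) (hV : Vᵀ * V = 1)
    (hVtop : IsUnit (topBlock hpd.le V))
    (Y : Ω → Fin d → ℝ)
    (η m κ : ℝ) (hη : 0 < η) (hm : 1 ≤ m) :
    let lam1p : ℝ := ∑ j : Fin p, lam (Fin.castLE hpd.le j)
    let lamRest : ℝ := ∑ i : Fin (d - p), lam ⟨p + i, by have := i.isLt; omega⟩
    let ν : ℝ := lamRest / lam1p
    let ν₁ : ℝ := max 1 ν
    let T : Matrix (Fin (d - p)) (Fin p) ℝ := botBlock V * (topBlock hpd.le V)⁻¹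
    let τ : ℝ := specNorm T
    τ ≤ κ →
    2 * lam1p * Real.sqrt (κ ^ 2 + 1) * m * η ≤ 1 →
    (∀ᵐ ω ∂μ, Real.sqrt (∑ j : Fin p, (∑ i, V i j * Y ω i) ^ 2) ≤ Real.sqrt (lam1p * m) ∧
      ∀ i, |Y ω i| ≤ Real.sqrt (lam i * m)) →
    (∀ᵐ ω ∂μ,
      (1 / 2 : ℝ) ≤ 1 + η * ((fun j => ∑ i, V i j * Y ω i) ⬝ᵥ
          (topBlock hpd.le V)⁻¹.mulVec (fun j : Fin p => Y ω (Fin.castLE hpd.le j))) ∧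
      IsUnit (topBlock hpd.le
        (((1 : Matrix (Fin d) (Fin d) ℝ) + η • Matrix.vecMulVec (Y ω) (Y ω)) * V)) ∧
      specNorm
          (botBlock (((1 : Matrix (Fin d) (Fin d) ℝ) + η • Matrix.vecMulVec (Y ω) (Y ω)) * V) *
              (topBlock hpd.le
                (((1 : Matrix (Fin d) (Fin d) ℝ) + η • Matrix.vecMulVec (Y ω) (Y ω)) * V))⁻¹ - T) ≤
        2 * m * η * (Real.sqrt ν * lam1p * (1 + τ ^ 2) + ν₁ * lam1p * τ)) := by
  intro lam1p lamRest ν ν₁ T τ hτκ hstep hae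
  have hτ : τ = ‖graphMatrix hpd.le V‖ := specNorm_eq_l2_opNorm T
  have hlam1p : 0 < lam1p := Finset.sum_pos (fun j _ => hpos _) ⟨⟨0, hp⟩, Finset.mem_univ _⟩
  have hlamRest : lamRest = ν * lam1p := (div_mul_cancel₀ _ hlam1p.ne').symm
  have hν : 0 ≤ ν := div_nonneg (Finset.sum_nonneg fun i _ => (hpos _).le) hlam1p.le
  have hlam_m : ∀ i, 0 ≤ lam i * m := fun i => mul_nonneg (hpos i).le (by linarith)
  filter_upwards [hae] with ω ⟨hz, hY⟩
  have htop : ‖toLp 2 (topVec hpd.le (Y ω))‖ ^ 2 ≤ lam1p * m :=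
    (norm_toLp_sq_le_sum_of_abs_le_sqrt (fun j => hlam_m _) fun j => hY _).trans_eq
      (Finset.sum_mul _ _ _).symm
  have hbot : ‖toLp 2 (botVec p (Y ω))‖ ^ 2 ≤ ν * (lam1p * m) := by
    rw [← mul_assoc, ← hlamRest]
    exact (norm_toLp_sq_le_sum_of_abs_le_sqrt (fun j => hlam_m _) fun j => hY _).trans_eq
      (Finset.sum_mul _ _ _).symm
  have hhalf : 1 / 2 ≤ 1 + η * ((Vᵀ *ᵥ Y ω) ⬝ᵥ (topBlock hpd.le V)⁻¹ *ᵥ topVec hpd.le (Y ω)) :=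
    one_half_le_one_add_mul_dotProduct_inv_topBlock_mulVec hpd.le hV hVtop hη.le (hτ ▸ hτκ)
      (by rw [Real.sq_sqrt (by positivity)]; linarith) ((norm_toLp_two_eq_sqrt _).trans_le hz)
      (Real.le_sqrt_of_sq_le htop)
  refine ⟨hhalf, isUnit_topBlock_ojaUpdate hpd.le η (Y ω) hVtop (by linarith), ?_⟩
  rw [specNorm_eq_l2_opNorm, hτ]
  exact (l2_opNorm_graphMatrix_ojaUpdate_sub_le hpd.le η (Y ω) hVtop hη.le hhalf hν htop
    hbot).trans_eq (by ring)
end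

section
/- Characterization of the spectral neighborhood 𝕊(κ). Let d > p ≥ 1, let V ∈ ℝ^{d×p} satisfy VᵀV = I_p, and let κ ≥ 0. Write V̄ := V_{(1:p,:)} and V̲ := V_{(p+1:d,:)}. Then every singular value of V̄ lies in the interval [1/√(1+κ²), 1] if and only if V̄ is invertible and ‖V̲ V̄^{−1}‖₂ ≤ κ, where ‖·‖₂ is the spectral norm. -/
open Matrix

/-- `s` is a singular value of `A` iff `s ≥ 0` and `s²` is an eigenvalue of `AᵀA`. -/
def IsSingularValue {m n : ℕ} (A : Matrix (Fin m) (Fin n) ℝ) (s : ℝ) : Prop :=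
  0 ≤ s ∧ s ^ 2 ∈ spectrum ℝ (Aᵀ * A)

/-!
Write `A = V̄` and `B = V̲`. Orthonormality of the columns of `V` says `AᵀA + BᵀB = 1`, so the
spectrum of `AᵀA` lies in `[0, 1]` and the upper bound on the singular values is automatic. The
lower bound `(1 + κ²)⁻¹ ≤ μ` on the spectrum of `AᵀA` is the quadratic-form inequality
`|x|² ≤ (1 + κ²) |Ax|²`, which by `|x|² = |Ax|² + |Bx|²` reads `|Bx|² ≤ κ² |Ax|²`. This forces `A`
to be injective, and substituting `x = A⁻¹ y` turns it into `|B A⁻¹ y| ≤ κ |y|`, i.e.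
`‖B A⁻¹‖₂ ≤ κ`.
-/

namespace Matrix

variable {m n : Type*} [Fintype m] [Fintype n]

lemma dotProduct_transpose_mul_self_mulVec (M : Matrix m n ℝ) (x : n → ℝ) :
    x ⬝ᵥ (Mᵀ * M) *ᵥ x = M *ᵥ x ⬝ᵥ M *ᵥ x := by
  rw [← mulVec_mulVec, dotProduct_mulVec, vecMul_transpose]

lemma IsHermitian.forall_le_of_mem_spectrum_iff [DecidableEq n] {H : Matrix n n ℝ}
    (hH : H.IsHermitian) (c : ℝ) :
    (∀ μ ∈ spectrum ℝ H, c ≤ μ) ↔ ∀ x, c * (x ⬝ᵥ x) ≤ x ⬝ᵥ H *ᵥ x := by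
  have hHc : (H - algebraMap ℝ _ c).IsHermitian := hH.sub (IsSelfAdjoint.algebraMap _ (.all c))
  calc (∀ μ ∈ spectrum ℝ H, c ≤ μ)
      ↔ spectrum ℝ (H - algebraMap ℝ _ c) ⊆ {a | 0 ≤ a} := by
        simp [← spectrum.sub_singleton_eq, Set.sub_singleton, Set.subset_def]
    _ ↔ (H - algebraMap ℝ _ c).PosSemidef := by
        rw [posSemidef_iff_isHermitian_and_spectrum_nonneg, and_iff_right hHc]
    _ ↔ ∀ x, c * (x ⬝ᵥ x) ≤ x ⬝ᵥ H *ᵥ x := by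
        rw [posSemidef_iff_dotProduct_mulVec, and_iff_right hHc]
        simp [sub_mulVec, Algebra.algebraMap_eq_smul_one, smul_mulVec]

lemma nonneg_of_mem_spectrum_transpose_mul_self [DecidableEq n] (M : Matrix m n ℝ) {μ : ℝ}
    (hμ : μ ∈ spectrum ℝ (Mᵀ * M)) : 0 ≤ μ := by
  have hM := posSemidef_conjTranspose_mul_self M
  rw [conjTranspose_eq_transpose_of_trivial,
    posSemidef_iff_isHermitian_and_spectrum_nonneg] at hM
  exact hM.2 hμ

lemma le_one_of_mem_spectrum_of_transpose_mul_self_add [DecidableEq n] {A : Matrix n n ℝ}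
    {B : Matrix m n ℝ} (hAB : Aᵀ * A + Bᵀ * B = 1) {μ : ℝ} (hμ : μ ∈ spectrum ℝ (Aᵀ * A)) :
    μ ≤ 1 := by
  have h : 1 - μ ∈ spectrum ℝ (Bᵀ * B) := by
    rw [eq_sub_of_add_eq' hAB, ← map_one (algebraMap ℝ _), ← spectrum.singleton_sub_eq]
    exact Set.sub_mem_sub rfl hμ
  linarith [nonneg_of_mem_spectrum_transpose_mul_self B h]

lemma dotProduct_self_eq_add_of_transpose_mul_self_add [DecidableEq n] {A : Matrix n n ℝ}
    {B : Matrix m n ℝ} (hAB : Aᵀ * A + Bᵀ * B = 1) (x : n → ℝ) :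
    x ⬝ᵥ x = A *ᵥ x ⬝ᵥ A *ᵥ x + B *ᵥ x ⬝ᵥ B *ᵥ x := by
  rw [← dotProduct_transpose_mul_self_mulVec, ← dotProduct_transpose_mul_self_mulVec,
    ← dotProduct_add, ← add_mulVec, hAB, one_mulVec]

lemma forall_mulVec_le_iff_isUnit_and_mul_inv [DecidableEq n] {A : Matrix n n ℝ}
    {B : Matrix m n ℝ} (hAB : Aᵀ * A + Bᵀ * B = 1) (c : ℝ) :
    (∀ x, B *ᵥ x ⬝ᵥ B *ᵥ x ≤ c * (A *ᵥ x ⬝ᵥ A *ᵥ x)) ↔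
      IsUnit A ∧ ∀ y, (B * A⁻¹) *ᵥ y ⬝ᵥ (B * A⁻¹) *ᵥ y ≤ c * (y ⬝ᵥ y) := by
  constructor
  · intro h
    have hA : IsUnit A := by
      refine mulVec_injective_iff_isUnit.mp <|
        (injective_iff_map_eq_zero A.mulVecLin).mpr fun x hx => ?_
      rw [mulVecLin_apply] at hx
      have hBx : B *ᵥ x ⬝ᵥ B *ᵥ x ≤ 0 := by simpa [hx] using h x
      have hxx := dotProduct_self_eq_add_of_transpose_mul_self_add hAB x
      rw [hx, dotProduct_zero, zero_add] at hxx
      exact dotProduct_self_eq_zero.mp <|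
        le_antisymm (hxx ▸ hBx) (by simpa using dotProduct_star_self_nonneg x)
    refine ⟨hA, fun y => ?_⟩
    have hdet := (isUnit_iff_isUnit_det A).mp hA
    simpa [mulVec_mulVec, mul_nonsing_inv _ hdet] using h (A⁻¹ *ᵥ y)
  · rintro ⟨hA, h⟩ x
    have hdet := (isUnit_iff_isUnit_det A).mp hA
    simpa [mulVec_mulVec, nonsing_inv_mul_cancel_right _ _ hdet] using h (A *ᵥ x)

theorem forall_inv_one_add_sq_le_spectrum_iff [DecidableEq n] {A : Matrix n n ℝ}
    {B : Matrix m n ℝ} (hAB : Aᵀ * A + Bᵀ * B = 1) (κ : ℝ) :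
    (∀ μ ∈ spectrum ℝ (Aᵀ * A), (1 + κ ^ 2)⁻¹ ≤ μ) ↔
      IsUnit A ∧ ∀ y, (B * A⁻¹) *ᵥ y ⬝ᵥ (B * A⁻¹) *ᵥ y ≤ κ ^ 2 * (y ⬝ᵥ y) := by
  have hH : (Aᵀ * A).IsHermitian := by
    simpa using isHermitian_conjTranspose_mul_self A
  rw [hH.forall_le_of_mem_spectrum_iff, ← forall_mulVec_le_iff_isUnit_and_mul_inv hAB]
  refine forall_congr' fun x => ?_
  rw [dotProduct_transpose_mul_self_mulVec, dotProduct_self_eq_add_of_transpose_mul_self_add hAB,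
    inv_mul_le_iff₀ (by positivity)]
  constructor <;> intro h <;> linarith

end Matrix

lemma norm_toLp_sq_eq_dotProduct {n : Type*} [Fintype n] (x : n → ℝ) :
    ‖WithLp.toLp 2 x‖ ^ 2 = x ⬝ᵥ x := by
  rw [EuclideanSpace.norm_sq_eq]
  simp [dotProduct, sq]

lemma specNorm_eq_norm_toEuclideanLin {m n : ℕ} (M : Matrix (Fin m) (Fin n) ℝ) :
    specNorm M = ‖LinearMap.toContinuousLinearMap (toEuclideanLin M)‖ := by
  rw [← ContinuousLinearMap.sSup_unitClosedBall_eq_norm, specNorm]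
  congr 1
  ext c
  constructor
  · rintro ⟨x, hx, rfl⟩
    refine ⟨WithLp.toLp 2 x, ?_, ?_⟩
    · simpa [EuclideanSpace.norm_eq] using hx
    · simp [EuclideanSpace.norm_eq]
  · rintro ⟨x, hx, rfl⟩
    refine ⟨x.ofLp, ?_, ?_⟩
    · simpa [EuclideanSpace.norm_eq] using hx
    · simp [EuclideanSpace.norm_eq]

lemma specNorm_le_iff {m n : ℕ} (M : Matrix (Fin m) (Fin n) ℝ) {κ : ℝ} (hκ : 0 ≤ κ) :
    specNorm M ≤ κ ↔ ∀ x, M *ᵥ x ⬝ᵥ M *ᵥ x ≤ κ ^ 2 * (x ⬝ᵥ x) := by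
  rw [specNorm_eq_norm_toEuclideanLin, ContinuousLinearMap.opNorm_le_iff hκ,
    (WithLp.equiv 2 (Fin n → ℝ)).forall_congr_left]
  refine forall_congr' fun x => ?_
  simp only [WithLp.equiv_symm_apply, LinearMap.coe_toContinuousLinearMap', toLpLin_toLp,
    toLin'_apply]
  rw [← sq_le_sq₀ (norm_nonneg _) (by positivity), mul_pow, norm_toLp_sq_eq_dotProduct,
    norm_toLp_sq_eq_dotProduct]

lemma Fin.sum_univ_eq_sum_castLE_add_sum_shift {M : Type*} [AddCommMonoid M] {d p : ℕ}
    (h : p ≤ d) (f : Fin d → M) :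
    ∑ i, f i = (∑ i : Fin p, f (Fin.castLE h i)) +
      ∑ i : Fin (d - p), f ⟨p + i, by have := i.isLt; omega⟩ := by
  rw [← Equiv.sum_comp (finSumFinEquiv.trans (finCongr (Nat.add_sub_cancel' h))) f,
    Fintype.sum_sum_type]
  rfl

lemma transpose_mul_topBlock_add_transpose_mul_botBlock {d p : ℕ} (h : p ≤ d)
    (V : Matrix (Fin d) (Fin p) ℝ) :
    (topBlock h V)ᵀ * topBlock h V + (botBlock V)ᵀ * botBlock V = Vᵀ * V := by
  ext j k
  simp only [Matrix.add_apply, mul_apply, transpose_apply, topBlock, botBlock, of_apply]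
  exact (Fin.sum_univ_eq_sum_castLE_add_sum_shift h fun i => V i j * V i k).symm

lemma forall_isSingularValue_iff {m n : ℕ} (A : Matrix (Fin m) (Fin n) ℝ) (P : ℝ → Prop) :
    (∀ s, IsSingularValue A s → P s) ↔ ∀ μ ∈ spectrum ℝ (Aᵀ * A), P √μ := by
  constructor
  · intro h μ hμ
    exact h _ ⟨Real.sqrt_nonneg μ,
      by rwa [Real.sq_sqrt (nonneg_of_mem_spectrum_transpose_mul_self A hμ)]⟩
  · rintro h s ⟨hs, hs2⟩
    simpa [Real.sqrt_sq hs] using h _ hs2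

theorem sphere_characterization_general (d p : ℕ) (hpd : p < d)
    (V : Matrix (Fin d) (Fin p) ℝ) (hV : Vᵀ * V = 1) (κ : ℝ) (hκ : 0 ≤ κ) :
    (∀ s : ℝ, IsSingularValue (topBlock hpd.le V) s →
        1 / Real.sqrt (1 + κ ^ 2) ≤ s ∧ s ≤ 1) ↔
      (IsUnit (topBlock hpd.le V) ∧
        specNorm (botBlock V * (topBlock hpd.le V)⁻¹) ≤ κ) := by
  have hAB := (transpose_mul_topBlock_add_transpose_mul_botBlock hpd.le V).trans hV
  rw [forall_isSingularValue_iff, specNorm_le_iff _ hκ,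
    ← forall_inv_one_add_sq_le_spectrum_iff hAB]
  refine forall₂_congr fun μ hμ => ?_
  have hμ0 := nonneg_of_mem_spectrum_transpose_mul_self _ hμ
  rw [one_div, ← Real.sqrt_inv, Real.sqrt_le_sqrt_iff hμ0, Real.sqrt_le_one,
    and_iff_left (le_one_of_mem_spectrum_of_transpose_mul_self_add hAB hμ)]

/-- Characterization of the spectral neighborhood `𝕊(κ)`: for a `d×p` matrix `V` with
orthonormal columns and `κ ≥ 0`, all singular values of the top block `V̄` lie in
`[1/√(1+κ²), 1]` iff `V̄` is invertible and `‖V̲ V̄⁻¹‖₂ ≤ κ`. -/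
theorem sphere_characterization (d p : ℕ) (hp : 1 ≤ p) (hpd : p < d)
    (V : Matrix (Fin d) (Fin p) ℝ) (hV : Vᵀ * V = 1) (κ : ℝ) (hκ : 0 ≤ κ) :
    (∀ s : ℝ, IsSingularValue (topBlock hpd.le V) s →
        1 / Real.sqrt (1 + κ ^ 2) ≤ s ∧ s ≤ 1) ↔
      (IsUnit (topBlock hpd.le V) ∧
        specNorm (botBlock V * (topBlock hpd.le V)⁻¹) ≤ κ) :=
  sphere_characterization_general d p hpd V hV κ hκ
end

section
/- Normalization-free one-step update formula for the Oja iteration. Let d > p ≥ 1, let V ∈ ℝ^{d×p} have invertible top block V̄ := V_{(1:p,:)}, and set T := V_{(p+1:d,:)} V̄^{−1}. Let Y ∈ ℝ^d, η ∈ ℝ, Z := VᵀY, Ȳ := Y_{(1:p)}, and ξ := Zᵀ V̄^{−1} Ȳ. Let S ∈ ℝ^{p×p} be any invertible matrix and V⁺ := (I_d + ηYYᵀ)V S. If 1 + ηξ ≠ 0, then the top block V⁺_{(1:p,:)} is invertible and V⁺_{(p+1:d,:)}(V⁺_{(1:p,:)})^{−1} − T = (η/(1+ηξ)) · [−T I_{d−p}]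 · Y Yᵀ · [I_p; T], where [−T I_{d−p}] ∈ ℝ^{(d−p)×d} and [I_p; T] ∈ ℝ^{d×p} are block matrices. In particular, V⁺_{(p+1:d,:)}(V⁺_{(1:p,:)})^{−1} does not depend on the choice of S. -/
open Matrix

lemma sum_split {d p : ℕ} (h : p ≤ d) (f : Fin d → ℝ) :
    ∑ i, f i = (∑ i : Fin p, f (Fin.castLE h i)) +
      ∑ i : Fin (d - p), f ⟨p + i, by have := i.isLt; omega⟩ := by
  rw [← Equiv.sum_comp (finSumFinEquiv.trans (finCongr (show p + (d - p) = d by omega))) f,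
    Fintype.sum_sum_type]
  refine congrArg₂ (· + ·) (Finset.sum_congr rfl fun i _ => ?_)
    (Finset.sum_congr rfl fun i _ => ?_) <;> congr 1

lemma vMV_mul_vMV {m n k : ℕ} (v : Fin m → ℝ) (w u : Fin n → ℝ) (x : Fin k → ℝ) :
    vecMulVec v w * vecMulVec u x = (w ⬝ᵥ u) • vecMulVec v x := by
  ext i j
  simp only [Matrix.mul_apply, vecMulVec_apply, Matrix.smul_apply, dotProduct, smul_eq_mul,
    Finset.sum_mul]
  exact Finset.sum_congr rfl fun l _ => by ring

lemma mul_vMV {m n k : ℕ} (A : Matrix (Fin m) (Fin n) ℝ) (u : Fin n → ℝ) (w : Fin k → ℝ) :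
    A * vecMulVec u w = vecMulVec (A *ᵥ u) w := by
  ext i j
  simp only [Matrix.mul_apply, vecMulVec_apply, mulVec, dotProduct, Finset.sum_mul]
  exact Finset.sum_congr rfl fun l _ => by ring

lemma vMV_mul {m n k : ℕ} (v : Fin m → ℝ) (w : Fin n → ℝ) (A : Matrix (Fin n) (Fin k) ℝ) :
    vecMulVec v w * A = vecMulVec v (w ᵥ* A) := by
  ext i j
  simp only [Matrix.mul_apply, vecMulVec_apply, vecMul, dotProduct, Finset.mul_sum]
  exact Finset.sum_congr rfl fun l _ => by ring

lemma sm_inv {n : ℕ} (u w : Fin n → ℝ) (η : ℝ) (hne : 1 + η * (w ⬝ᵥ u) ≠ 0) :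
    (1 + η • vecMulVec u w) * (1 - (η / (1 + η * (w ⬝ᵥ u))) • vecMulVec u w) = 1 ∧
    (1 - (η / (1 + η * (w ⬝ᵥ u))) • vecMulVec u w) * (1 + η • vecMulVec u w) = 1 := by
  set ξ := w ⬝ᵥ u
  set c := η / (1 + η * ξ) with hc
  have hcoef : η - c - η * c * ξ = 0 := by rw [hc]; field_simp; ring
  have hAA := vMV_mul_vMV u w u w
  constructor
  · calc (1 + η • vecMulVec u w) * (1 - c • vecMulVec u w)
        = 1 + (η - c - η * c * ξ) • vecMulVec u w := by
          simp only [mul_sub, add_mul, mul_one, one_mul, smul_mul_assoc,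
            Matrix.mul_smul, hAA, smul_smul]
          module
      _ = 1 := by rw [hcoef, zero_smul, add_zero]
  · calc (1 - c • vecMulVec u w) * (1 + η • vecMulVec u w)
        = 1 + (η - c - η * c * ξ) • vecMulVec u w := by
          simp only [mul_add, sub_mul, mul_one, one_mul, smul_mul_assoc,
            Matrix.mul_smul, hAA, smul_smul]
          module
      _ = 1 := by rw [hcoef, zero_smul, add_zero]

/-- Normalization-free one-step update formula for the Oja iteration:
if `1 + ηξ ≠ 0` (with `ξ = Zᵀ V̄⁻¹ Ȳ`), then for any invertible normalization `S`,
the top block of `V⁺ = (I + ηYYᵀ)VS` is invertible and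
`𝒯(V⁺) − T = (η/(1+ηξ)) [−T I] YYᵀ [I; T]`; in particular `𝒯(V⁺)` does not depend
on the choice of `S`. -/
theorem oja_update_formula (d p : ℕ) (hp : 1 ≤ p) (hpd : p < d)
    (V : Matrix (Fin d) (Fin p) ℝ) (hV : IsUnit (topBlock hpd.le V))
    (Y : Fin d → ℝ) (η : ℝ)
    (S : Matrix (Fin p) (Fin p) ℝ) (hS : IsUnit S) :
    let T : Matrix (Fin (d - p)) (Fin p) ℝ := botBlock V * (topBlock hpd.le V)⁻¹
    let Z : Fin p → ℝ := fun j => ∑ i, V i j * Y i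
    let ξ : ℝ := Z ⬝ᵥ (topBlock hpd.le V)⁻¹.mulVec (fun j : Fin p => Y (Fin.castLE hpd.le j))
    let Vp : Matrix (Fin d) (Fin p) ℝ :=
      ((1 : Matrix (Fin d) (Fin d) ℝ) + η • Matrix.vecMulVec Y Y) * V * S
    let Tl : Matrix (Fin (d - p)) (Fin d) ℝ :=
      Matrix.of fun i j =>
        if h : (j : ℕ) < p then -T i ⟨j, h⟩ else if (j : ℕ) = p + (i : ℕ) then 1 else 0
    let Tr : Matrix (Fin d) (Fin p) ℝ :=
      Matrix.of fun i j =>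
        if h : (i : ℕ) < p then (if (i : ℕ) = (j : ℕ) then 1 else 0)
        else T ⟨(i : ℕ) - p, by have := i.isLt; omega⟩ j
    1 + η * ξ ≠ 0 →
      IsUnit (topBlock hpd.le Vp) ∧
      botBlock Vp * (topBlock hpd.le Vp)⁻¹ - T =
        (η / (1 + η * ξ)) • (Tl * Matrix.vecMulVec Y Y * Tr) := by
  intro T Z ξ Vp Tl Tr hne
  set M : Matrix (Fin p) (Fin p) ℝ := topBlock hpd.le V with hM
  set Bm : Matrix (Fin (d - p)) (Fin p) ℝ := botBlock V with hBm
  set u : Fin p → ℝ := fun j => Y (Fin.castLE hpd.le j) with hu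
  set v : Fin (d - p) → ℝ := fun i => Y ⟨p + i, by have := i.isLt; omega⟩ with hv
  set w : Fin p → ℝ := Z ᵥ* M⁻¹ with hw
  set c : ℝ := η / (1 + η * ξ) with hc
  have hT : T = Bm * M⁻¹ := rfl
  have hVpdef : Vp = ((1 : Matrix (Fin d) (Fin d) ℝ) + η • Matrix.vecMulVec Y Y) * V * S := rfl
  have hZ : ∀ j, Z j = ∑ i, V i j * Y i := fun _ => rfl
  have hξ : ξ = Z ⬝ᵥ M⁻¹ *ᵥ u := rfl
  have hMdet : IsUnit M.det := (Matrix.isUnit_iff_isUnit_det M).mp hV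
  have hSdet : IsUnit S.det := (Matrix.isUnit_iff_isUnit_det S).mp hS
  have hMi : M * M⁻¹ = 1 := Matrix.mul_nonsing_inv M hMdet
  have hiM : M⁻¹ * M = 1 := Matrix.nonsing_inv_mul M hMdet
  have hSi : S * S⁻¹ = 1 := Matrix.mul_nonsing_inv S hSdet
  have hwM : w ᵥ* M = Z := by
    rw [hw, Matrix.vecMul_vecMul, hiM, Matrix.vecMul_one]
  have hξw : ξ = w ⬝ᵥ u := by rw [hξ, Matrix.dotProduct_mulVec]
  -- entries of (1 + η Y Yᵀ) V
  have hVp' : ∀ (a : Fin d) (b : Fin p),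
      (((1 : Matrix (Fin d) (Fin d) ℝ) + η • Matrix.vecMulVec Y Y) * V) a b
        = V a b + η * Y a * Z b := by
    intro a b
    rw [Matrix.add_mul, Matrix.one_mul, Matrix.smul_mul, vMV_mul, Matrix.add_apply,
      Matrix.smul_apply, vecMulVec_apply, hZ]
    simp only [vecMul, dotProduct, smul_eq_mul, Finset.mul_sum]
    exact congrArg _ (Finset.sum_congr rfl fun k _ => by ring)
  have htop : topBlock hpd.le Vp = (M + η • vecMulVec u Z) * S := by
    ext i j
    show Vp (Fin.castLE hpd.le i) j = _
    rw [hVpdef, Matrix.mul_apply, Matrix.mul_apply]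
    refine Finset.sum_congr rfl fun k _ => ?_
    rw [hVp', Matrix.add_apply, Matrix.smul_apply, vecMulVec_apply]
    simp only [smul_eq_mul, hM, hu, topBlock, Matrix.of_apply]
    ring_nf
  have hbot : botBlock Vp = (Bm + η • vecMulVec v Z) * S := by
    ext i j
    show Vp ⟨p + i, by have := i.isLt; omega⟩ j = _
    rw [hVpdef, Matrix.mul_apply, Matrix.mul_apply]
    refine Finset.sum_congr rfl fun k _ => ?_
    rw [hVp', Matrix.add_apply, Matrix.smul_apply, vecMulVec_apply]
    simp only [smul_eq_mul, hBm, hv, botBlock, Matrix.of_apply]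
    ring_nf
  have hfac : M + η • vecMulVec u Z = (1 + η • vecMulVec u w) * M := by
    rw [Matrix.add_mul, Matrix.one_mul, smul_mul_assoc, vMV_mul, hwM]
  have hne' : 1 + η * (w ⬝ᵥ u) ≠ 0 := by rwa [← hξw]
  obtain ⟨hPQ, hQP⟩ := sm_inv u w η hne'
  rw [← hξw] at hPQ hQP
  set P : Matrix (Fin p) (Fin p) ℝ := 1 + η • vecMulVec u w with hP
  set Qm : Matrix (Fin p) (Fin p) ℝ := 1 - c • vecMulVec u w with hQ
  have hPunit : IsUnit P := ⟨⟨P, Qm, hPQ, hQP⟩, rfl⟩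
  have htopunit : IsUnit (topBlock hpd.le Vp) := by
    rw [htop, hfac]; exact (hPunit.mul hV).mul hS
  refine ⟨htopunit, ?_⟩
  have hinv : (topBlock hpd.le Vp)⁻¹ = S⁻¹ * (M⁻¹ * Qm) := by
    apply Matrix.inv_eq_right_inv
    rw [htop, hfac]
    simp only [Matrix.mul_assoc]
    rw [← Matrix.mul_assoc S S⁻¹, hSi, Matrix.one_mul, ← Matrix.mul_assoc M M⁻¹, hMi,
      Matrix.one_mul, hPQ]
  -- vecMul split of Z
  have hZsplit : Z = u ᵥ* M + v ᵥ* Bm := by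
    funext b
    rw [hZ, sum_split hpd.le (fun i => V i b * Y i)]
    simp only [Pi.add_apply, vecMul, dotProduct, topBlock, botBlock, hM, hBm, hu, hv,
      Matrix.of_apply]
    exact congrArg₂ (· + ·) (Finset.sum_congr rfl fun k _ => by ring)
      (Finset.sum_congr rfl fun k _ => by ring)
  have hwval : w = u + v ᵥ* T := by
    rw [hw, hZsplit, Matrix.add_vecMul, Matrix.vecMul_vecMul, Matrix.vecMul_vecMul, hMi,
      Matrix.vecMul_one, hT]
  -- RHS computations
  have hTlY : Tl *ᵥ Y = v - T *ᵥ u := by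
    funext i
    show ∑ j, Tl i j * Y j = _
    rw [sum_split hpd.le (fun j => Tl i j * Y j)]
    have e1 : ∀ j : Fin p, Tl i (Fin.castLE hpd.le j) * Y (Fin.castLE hpd.le j)
        = -(T i j * u j) := by
      intro j
      simp only [Tl, Matrix.of_apply, Fin.coe_castLE]
      rw [dif_pos j.isLt]
      simp only [Fin.eta, hu]
      ring
    have e2 : ∀ j : Fin (d - p),
        Tl i ⟨p + j, by have := j.isLt; omega⟩ * Y ⟨p + j, by have := j.isLt; omega⟩
        = (if j = i then 1 else 0) * v j := by
      intro j
      simp only [Tl, Matrix.of_apply]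
      rw [dif_neg (by omega)]
      have hiff : (p + (j : ℕ) = p + (i : ℕ)) ↔ j = i := by
        simp [Fin.ext_iff]
      rw [if_congr hiff rfl rfl]
    rw [Finset.sum_congr rfl (fun j _ => e1 j), Finset.sum_congr rfl (fun j _ => e2 j)]
    simp only [Finset.sum_neg_distrib, ite_mul, one_mul, zero_mul, Finset.sum_ite_eq',
      Finset.mem_univ, if_true, Pi.sub_apply]
    have h3 : (T *ᵥ u) i = ∑ j, T i j * u j := rfl
    rw [h3]
    ring
  have hYTr : Y ᵥ* Tr = w := by
    funext j
    show ∑ i, Y i * Tr i j = _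
    rw [sum_split hpd.le (fun i => Y i * Tr i j), hwval]
    have e1 : ∀ i : Fin p, Y (Fin.castLE hpd.le i) * Tr (Fin.castLE hpd.le i) j
        = u i * (if i = j then 1 else 0) := by
      intro i
      simp only [Tr, Matrix.of_apply, Fin.coe_castLE]
      rw [dif_pos i.isLt]
      have hiff : ((i : ℕ) = (j : ℕ)) ↔ i = j := by simp [Fin.ext_iff]
      rw [if_congr hiff rfl rfl]
    have e2 : ∀ i : Fin (d - p),
        Y ⟨p + i, by have := i.isLt; omega⟩ * Tr ⟨p + i, by have := i.isLt; omega⟩ j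
        = v i * T i j := by
      intro i
      simp only [Tr, Matrix.of_apply]
      rw [dif_neg (by omega)]
      have : (⟨p + (i : ℕ) - p, by have := i.isLt; omega⟩ : Fin (d - p)) = i :=
        Fin.ext (by simp)
      rw [this]
    rw [Finset.sum_congr rfl (fun i _ => e1 i), Finset.sum_congr rfl (fun i _ => e2 i)]
    simp only [mul_ite, mul_one, mul_zero, Finset.sum_ite_eq', Finset.mem_univ, if_true]
    rfl
  -- final algebra
  have hc2 : η - c * η * ξ = c := by rw [hc]; field_simp; ring
  have hsub : vecMulVec (v - T *ᵥ u) w = vecMulVec v w - vecMulVec (T *ᵥ u) w := by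
    ext a b; simp [vecMulVec_apply, sub_mul]
  rw [mul_vMV Tl Y Y, vMV_mul, hTlY, hYTr]
  rw [hbot, hinv]
  simp only [Matrix.mul_assoc]
  rw [← Matrix.mul_assoc S S⁻¹, hSi, Matrix.one_mul, ← Matrix.mul_assoc, Matrix.add_mul,
    Matrix.smul_mul, vMV_mul, ← hw, ← hT]
  rw [hQ, Matrix.mul_sub, Matrix.mul_one, Matrix.mul_smul, Matrix.add_mul, Matrix.smul_mul,
    mul_vMV, vMV_mul_vMV, ← hξw, hsub]
  rw [hc]
  match_scalars <;> field_simp <;> ring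
end
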